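/- arXiv:1509.03226 — 6 statements merged into one kernel-verified Lean document; each statement's English description precedes it below -/
import Mathlib

section
/- For every r ≥ 1 and every n ≥ 0, the r-th generation hyperfibonacci numbers satisfy F^{(r)}_{n+2} = F^{(r)}_{n+1} + F^{(r)}_n + C(n+r, r−1), where C(n+r, r−1) is the binomial coefficient (the n-th regular (r−1)-topic number). -/
/-- Hyperfibonacci numbers: `hfib 0 n = F_n`, `hfib (r+1) n = ∑_{k=0}^n hfib r k`. -/
def hfib : ℕ → ℕ → ℕ
  | 0, n => Nat.fib n
  | r + 1, n => ∑ k ∈ Finset.range (n + 1), hfib r k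

lemma hfib_zero : ∀ r, hfib r 0 = 0
  | 0 => rfl
  | r + 1 => by simp [hfib, hfib_zero r]

lemma hfib_one : ∀ r, hfib r 1 = 1
  | 0 => rfl
  | r + 1 => by
      simp [hfib, Finset.sum_range_succ, hfib_zero r, hfib_one r]

lemma hfib_succ_succ (r n : ℕ) :
    hfib (r + 1) (n + 1) = hfib (r + 1) n + hfib r (n + 1) := by
  simp [hfib, Finset.sum_range_succ]

lemma hfib_key : ∀ r n, hfib r (n + 2) = hfib (r + 1) n + Nat.choose (n + r + 1) r
  | 0, n => by
      have := Nat.fib_succ_eq_succ_sum (n + 1)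
      simp [hfib, this]
  | r + 1, 0 => by
      simp [hfib, Finset.sum_range_succ, hfib_zero r, hfib_one r,
        hfib_key r 0, hfib_zero (r + 1), hfib_zero (r + 2)]
      omega
  | r + 1, n + 1 => by
      have h1 : hfib (r + 1) (n + 3) = hfib (r + 1) (n + 2) + hfib r (n + 3) :=
        hfib_succ_succ r (n + 2)
      rw [h1, hfib_key (r + 1) n, hfib_key r (n + 1),
        hfib_succ_succ (r + 1) n]
      have : (n + 1 + (r + 1) + 1).choose (r + 1)
          = (n + (r + 1) + 1).choose (r + 1) + (n + 1 + r + 1).choose r := by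
        have := Nat.choose_succ_succ (n + r + 2) r
        simp only [show n + 1 + (r + 1) + 1 = n + r + 2 + 1 by ring,
          show n + (r + 1) + 1 = n + r + 2 by ring,
          show n + 1 + r + 1 = n + r + 2 by ring, this]
        exact Nat.add_comm _ _
      omega

/-- for `r ≥ 1`,
`F^{(r)}_{n+2} = F^{(r)}_{n+1} + F^{(r)}_n + C(n+r, r-1)`. -/
theorem stmt_5 (r : ℕ) (hr : 1 ≤ r) (n : ℕ) :
    hfib r (n + 2) = hfib r (n + 1) + hfib r n + Nat.choose (n + r) (r - 1) := by
  obtain ⟨s, rfl⟩ : ∃ s, r = s + 1 := ⟨r - 1, by omega⟩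
  rw [hfib_succ_succ s (n + 1), hfib_key s n, hfib_succ_succ s n]
  have : n + (s + 1) = n + s + 1 := by ring
  simp [this]
  omega
end

section
/- For every r ≥ 1 there exists an (r+2)×(r+2) integer matrix Q in companion form — i.e., Q(i, i+1) = 1 for 0 ≤ i ≤ r and Q(i, j) = 0 for 0 ≤ i ≤ r, j ≠ i+1 (only the last row of Q is unconstrained) — such that for every n ≥ 0 and every 0 ≤ i ≤ r+1, the vector recurrence F^{(r)}_{n+1+i} = Σ_{j=0}^{r+1} Q(i, j)·F^{(r)}_{n+j} holds. -/
lemma hfib_succ (r m : ℕ) : hfib (r+1) (m+1) = hfib (r+1) m + hfib r (m+1) := by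
  simp [hfib, Finset.sum_range_succ]

lemma hfib_key_s7 (r : ℕ) : ∃ c : ℕ → ℤ, c (r+2) = 1 ∧ (∀ j, r+2 < j → c j = 0) ∧
    ∀ n, ∑ j ∈ Finset.range (r+3), c j * (hfib r (n+j) : ℤ) = 0 := by
  induction r with
  | zero =>
    refine ⟨fun j => if j = 2 then 1 else if j < 2 then -1 else 0, by norm_num, ?_, ?_⟩
    · intro j hj
      have h1 : j ≠ 2 := by omega
      have h2 : ¬ j < 2 := by omega
      simp [h1, h2]
    · intro n
      have hf : (Nat.fib (n+2) : ℤ) = Nat.fib n + Nat.fib (n+1) := by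
        rw [Nat.fib_add_two]; push_cast; ring
      simp [Finset.sum_range_succ, hfib, hf]
      ring
  | succ r ih =>
    obtain ⟨c, hc1, hc0, hrec⟩ := ih
    refine ⟨fun j => (if j = 0 then 0 else c (j-1)) - c j, ?_, ?_, ?_⟩
    · simp [hc1, hc0 (r+3) (by omega)]
    · intro j hj
      have h1 : j ≠ 0 := by omega
      simp [h1, hc0 (j-1) (by omega), hc0 j (by omega)]
    · intro n
      have split : ∀ j ∈ Finset.range (r+4),
          ((if j = 0 then 0 else c (j-1)) - c j) * (hfib (r+1) (n+j) : ℤ)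
          = (if j = 0 then 0 else c (j-1)) * (hfib (r+1) (n+j) : ℤ)
            - c j * (hfib (r+1) (n+j) : ℤ) := by
        intro j _; ring
      rw [Finset.sum_congr rfl split, Finset.sum_sub_distrib]
      have S1 : ∑ j ∈ Finset.range (r+4),
          (if j = 0 then 0 else c (j-1)) * (hfib (r+1) (n+j) : ℤ)
          = ∑ j ∈ Finset.range (r+3), c j * (hfib (r+1) (n+j+1) : ℤ) := by
        rw [Finset.sum_range_succ']
        simp [← Nat.add_assoc]
      have S2 : ∑ j ∈ Finset.range (r+4), c j * (hfib (r+1) (n+j) : ℤ)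
          = ∑ j ∈ Finset.range (r+3), c j * (hfib (r+1) (n+j) : ℤ) := by
        rw [Finset.sum_range_succ, hc0 (r+3) (by omega)]
        simp
      rw [S1, S2, ← Finset.sum_sub_distrib]
      have : ∀ j ∈ Finset.range (r+3),
          c j * (hfib (r+1) (n+j+1) : ℤ) - c j * (hfib (r+1) (n+j) : ℤ)
          = c j * (hfib r ((n+1)+j) : ℤ) := by
        intro j _
        have := hfib_succ r (n+j)
        have hcast : (hfib (r+1) (n+j+1) : ℤ) = hfib (r+1) (n+j) + hfib r (n+j+1) := by
          rw [this]; push_cast; ring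
        have harg : (n+1)+j = n+j+1 := by omega
        rw [hcast, harg]; ring
      rw [Finset.sum_congr rfl this]
      exact hrec (n+1)

/-- for every `r ≥ 1` there is an `(r+2)×(r+2)` integer companion
matrix `Q` (rows `0,…,r` are the shift: `Q i (i+1) = 1` and `Q i j = 0` otherwise)
such that `F^{(r)}_{n+1+i} = ∑_j Q i j * F^{(r)}_{n+j}` for all `n` and `i`. -/
theorem stmt_7 (r : ℕ) (hr : 1 ≤ r) :
    ∃ Q : Matrix (Fin (r + 2)) (Fin (r + 2)) ℤ,
      (∀ i j : Fin (r + 2), (i : ℕ) ≤ r →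
        Q i j = if (j : ℕ) = (i : ℕ) + 1 then 1 else 0) ∧
      (∀ n : ℕ, ∀ i : Fin (r + 2),
        (hfib r (n + 1 + i) : ℤ) = ∑ j : Fin (r + 2), Q i j * hfib r (n + j)) := by
  obtain ⟨c, hc1, hc0, hrec⟩ := hfib_key_s7 r
  refine ⟨fun i j => if (i : ℕ) ≤ r then (if (j : ℕ) = (i : ℕ) + 1 then 1 else 0)
    else - c j, ?_, ?_⟩
  · intro i j hi
    simp [Matrix.of_apply, hi]
  · intro n i
    by_cases hi : (i : ℕ) ≤ r
    · simp only [hi, if_true]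
      have hlt : (i : ℕ) + 1 < r + 2 := by omega
      have : ∑ j : Fin (r+2), (if (j : ℕ) = (i : ℕ) + 1 then (1:ℤ) else 0) * hfib r (n + j)
          = ∑ j : Fin (r+2), (if j = (⟨(i:ℕ)+1, hlt⟩ : Fin (r+2)) then (hfib r (n + j) : ℤ) else 0) := by
        apply Finset.sum_congr rfl
        intro j _
        by_cases h : j = (⟨(i:ℕ)+1, hlt⟩ : Fin (r+2))
        · have : (j : ℕ) = (i : ℕ) + 1 := by rw [h]
          simp [h, this]
        · have : (j : ℕ) ≠ (i : ℕ) + 1 := by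
            intro hc; exact h (Fin.ext hc)
          simp [h, this]
      rw [this, Finset.sum_ite_eq']
      simp only [Finset.mem_univ, if_true]
      norm_cast
      congr 1
      omega
    · have hi' : (i : ℕ) = r + 1 := by omega
      simp only [hi, if_false]
      have h0 := hrec n
      rw [Finset.sum_range_succ] at h0
      have hsum : ∑ j : Fin (r+2), (- c j) * (hfib r (n + j) : ℤ)
          = ∑ j ∈ Finset.range (r+2), (- c j) * (hfib r (n + j) : ℤ) := by
        rw [Finset.sum_range fun j => (- c j) * (hfib r (n + j) : ℤ)]
      rw [hsum]
      have : (hfib r (n + 1 + i) : ℤ) = hfib r (n + (r+2)) := by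
        congr 2
        omega
      rw [this]
      have : ∑ j ∈ Finset.range (r+2), (- c j) * (hfib r (n + j) : ℤ)
          = - ∑ j ∈ Finset.range (r+2), c j * (hfib r (n + j) : ℤ) := by
        rw [← Finset.sum_neg_distrib]
        apply Finset.sum_congr rfl
        intro j _; ring
      rw [this]
      have := h0
      rw [hc1] at this
      linarith [this]
end

section
/- Let r ≥ 3 and let Q be an (r+2)×(r+2) integer matrix in companion form (Q(i, i+1) = 1 for 0 ≤ i ≤ r and Q(i, j) = 0 for 0 ≤ i ≤ r, j ≠ i+1) such that for every n ≥ 0 and every 0 ≤ i ≤ r+1, F^{(r)}_{n+1+i} = Σ_{j=0}^{r+1} Q(i, j)·F^{(r)}_{n+j}. Then the last three entries of the bottom row of Q are Q(r+1, r+1) = r + 1, Q(r+1, r) = 1 − C(r+1, 2), and Q(r+1, r−1) = (r³ − 7r)/6. -/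
open Finset


lemma hfib_step (t m : ℕ) : hfib (t+1) (m+1) = hfib (t+1) m + hfib t (m+1) := by
  show (∑ k ∈ range (m+1+1), hfib t k) = _
  rw [sum_range_succ]; rfl

lemma fibsum (c m : ℕ) : ∑ i ∈ range (m+1), (Nat.fib (i + c) : ℤ)
    = (Nat.fib (m + c + 2) : ℤ) - Nat.fib (c + 1) := by
  induction m with
  | zero =>
    have h := Nat.fib_add_two (n := c)
    simp only [range_one, sum_singleton, zero_add]
    push_cast [h]; ring
  | succ m ih =>
    rw [sum_range_succ, ih]
    have h := Nat.fib_add_two (n := m + c + 1)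
    have e1 : m + 1 + c = m + c + 1 := by omega
    have e2 : m + 1 + c + 2 = m + c + 1 + 2 := by omega
    rw [e1, h]; push_cast; ring

lemma hockey (k : ℕ) : ∀ m, ∑ i ∈ range (m+1), ((i + k).choose k : ℤ)
    = ((m + k + 1).choose (k+1) : ℤ) := by
  intro m
  induction m with
  | zero => simp
  | succ m ih =>
    rw [sum_range_succ, ih]
    have h : (m + k + 1 + 1).choose (k+1) = (m+k+1).choose k + (m+k+1).choose (k+1) :=
      Nat.choose_succ_succ (m+k+1) k
    have e1 : m + 1 + k = m + k + 1 := by omega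
    have e2 : m + 1 + k + 1 = m + k + 1 + 1 := by omega
    rw [e1, h]; push_cast; ring


lemma altsum_succ (r : ℕ) (X : ℕ → ℤ) :
    ∑ i ∈ range (r+2), (-1:ℤ)^i * ((r+1).choose i : ℤ) * X i
      = ∑ i ∈ range (r+1), (-1:ℤ)^i * (r.choose i : ℤ) * (X i - X (i+1)) := by
  have hL : ∑ i ∈ range (r+2), (-1:ℤ)^i * ((r+1).choose i : ℤ) * X i
      = ∑ i ∈ range (r+1), (-1:ℤ)^(i+1) * (((r.choose i : ℤ)) + (r.choose (i+1) : ℤ)) * X (i+1)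
        + X 0 := by
    rw [sum_range_succ' (fun i => (-1:ℤ)^i * ((r+1).choose i : ℤ) * X i) (r+1)]
    simp only [Nat.choose_succ_succ]
    push_cast
    simp
  have hS2 : ∑ i ∈ range (r+2), (-1:ℤ)^i * (r.choose i : ℤ) * X i
      = ∑ i ∈ range (r+1), (-1:ℤ)^(i+1) * (r.choose (i+1) : ℤ) * X (i+1) + X 0 := by
    rw [sum_range_succ' (fun i => (-1:ℤ)^i * (r.choose i : ℤ) * X i) (r+1)]
    simp
  have hS2' : ∑ i ∈ range (r+2), (-1:ℤ)^i * (r.choose i : ℤ) * X i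
      = ∑ i ∈ range (r+1), (-1:ℤ)^i * (r.choose i : ℤ) * X i := by
    rw [sum_range_succ]
    simp [Nat.choose_succ_self]
  rw [hL]
  have expand : ∑ i ∈ range (r+1), (-1:ℤ)^(i+1) * (((r.choose i : ℤ)) + (r.choose (i+1) : ℤ)) * X (i+1)
      = (∑ i ∈ range (r+1), (-1:ℤ)^(i+1) * (r.choose i : ℤ) * X (i+1))
        + ∑ i ∈ range (r+1), (-1:ℤ)^(i+1) * (r.choose (i+1) : ℤ) * X (i+1) := by
    rw [← sum_add_distrib]; apply sum_congr rfl; intro i _; ring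
  rw [expand]
  have h3 : ∑ i ∈ range (r+1), (-1:ℤ)^(i+1) * (r.choose (i+1) : ℤ) * X (i+1) + X 0
      = ∑ i ∈ range (r+1), (-1:ℤ)^i * (r.choose i : ℤ) * X i := by
    rw [← hS2, hS2']
  have h4 : ∑ i ∈ range (r+1), (-1:ℤ)^(i+1) * (r.choose i : ℤ) * X (i+1)
      = - ∑ i ∈ range (r+1), (-1:ℤ)^i * (r.choose i : ℤ) * X (i+1) := by
    rw [← sum_neg_distrib]; apply sum_congr rfl; intro i _; ring
  calc _ = (∑ i ∈ range (r+1), (-1:ℤ)^(i+1) * (r.choose i : ℤ) * X (i+1))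
        + (∑ i ∈ range (r+1), (-1:ℤ)^(i+1) * (r.choose (i+1) : ℤ) * X (i+1) + X 0) := by ring
    _ = - (∑ i ∈ range (r+1), (-1:ℤ)^i * (r.choose i : ℤ) * X (i+1))
        + ∑ i ∈ range (r+1), (-1:ℤ)^i * (r.choose i : ℤ) * X i := by rw [h3, h4]
    _ = _ := by rw [← sum_neg_distrib, ← sum_add_distrib]; apply sum_congr rfl; intro i _; ring


lemma chooseG : ∀ r k s : ℕ, k < r →
    ∑ i ∈ range (r+1), (-1:ℤ)^i * (r.choose i : ℤ) * ((i + s).choose k : ℤ) = 0 := by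
  intro r
  induction r with
  | zero => intro k s h; omega
  | succ r ih =>
    intro k s hk
    rw [show r + 1 + 1 = r + 2 from rfl, altsum_succ r (fun i => ((i+s).choose k : ℤ))]
    rcases k with _ | k
    · simp
    · have key : ∀ i : ℕ, (((i+s).choose (k+1) : ℤ)) - (((i+1+s).choose (k+1) : ℤ))
          = -(((i+s).choose k : ℤ)) := by
        intro i
        have h := Nat.choose_succ_succ (i+s) k
        have e1 : i + 1 + s = i + s + 1 := by omega
        rw [e1, h]; push_cast; ring
      have : ∑ i ∈ range (r+1), (-1:ℤ)^i * (r.choose i : ℤ)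
            * ((((i+s).choose (k+1) : ℤ)) - (((i+1+s).choose (k+1) : ℤ)))
          = - ∑ i ∈ range (r+1), (-1:ℤ)^i * (r.choose i : ℤ) * ((i + s).choose k : ℤ) := by
        rw [← sum_neg_distrib]; apply sum_congr rfl; intro i _; rw [key i]; ring
      rw [this, ih k s (by omega)]; ring

lemma fibG (r : ℕ) : ∀ m, ∑ i ∈ range (r+1), (-1:ℤ)^i * (r.choose i : ℤ) * (Nat.fib (r + m + i) : ℤ)
    = (-1:ℤ)^r * (Nat.fib m : ℤ) := by
  induction r with
  | zero => intro m; simp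
  | succ r ih =>
    intro m
    rw [show r + 1 + 1 = r + 2 from rfl, altsum_succ r (fun i => (Nat.fib (r+1+m+i) : ℤ))]
    have key : ∀ i : ℕ, ((Nat.fib (r+1+m+i) : ℤ)) - ((Nat.fib (r+1+m+(i+1)) : ℤ))
        = -(Nat.fib (r + m + i) : ℤ) := by
      intro i
      have h := Nat.fib_add_two (n := r + m + i)
      have e1 : r + 1 + m + i = r + m + i + 1 := by omega
      have e2 : r + 1 + m + (i+1) = r + m + i + 2 := by omega
      rw [e1, e2, h]; push_cast; ring
    have : ∑ i ∈ range (r+1), (-1:ℤ)^i * (r.choose i : ℤ)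
          * (((Nat.fib (r+1+m+i) : ℤ)) - ((Nat.fib (r+1+m+(i+1)) : ℤ)))
        = - ∑ i ∈ range (r+1), (-1:ℤ)^i * (r.choose i : ℤ) * (Nat.fib (r + m + i) : ℤ) := by
      rw [← sum_neg_distrib]; apply sum_congr rfl; intro i _; rw [key i]; ring
    rw [this, ih m, pow_succ]; ring

lemma hfib_closed : ∀ t m : ℕ, (hfib t m : ℤ)
    = (Nat.fib (m + 2*t) : ℤ)
      - ∑ k ∈ range t, (Nat.fib (2*(t-k)-1) : ℤ) * ((m + k).choose k : ℤ) := by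
  intro t
  induction t with
  | zero => intro m; simp [hfib]
  | succ t ih =>
    intro m
    have hdef : (hfib (t+1) m : ℤ) = ∑ i ∈ range (m+1), (hfib t i : ℤ) := by
      show ((∑ k ∈ range (m+1), hfib t k : ℕ) : ℤ) = _
      push_cast; rfl
    rw [hdef]
    have h1 : ∑ i ∈ range (m+1), (hfib t i : ℤ)
        = (∑ i ∈ range (m+1), (Nat.fib (i + 2*t) : ℤ))
          - ∑ i ∈ range (m+1), ∑ k ∈ range t, (Nat.fib (2*(t-k)-1) : ℤ) * ((i + k).choose k : ℤ) := by
      rw [← sum_sub_distrib]; apply sum_congr rfl; intro i _; rw [ih i]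
    rw [h1, fibsum (2*t) m]
    have h2 : ∑ i ∈ range (m+1), ∑ k ∈ range t, (Nat.fib (2*(t-k)-1) : ℤ) * ((i + k).choose k : ℤ)
        = ∑ k ∈ range t, (Nat.fib (2*(t-k)-1) : ℤ) * ((m + k + 1).choose (k+1) : ℤ) := by
      rw [sum_comm]
      apply sum_congr rfl; intro k _
      rw [← mul_sum, hockey k m]
    rw [h2]
    have h3 : ∑ k ∈ range (t+1), (Nat.fib (2*(t+1-k)-1) : ℤ) * ((m + k).choose k : ℤ)
        = (∑ k ∈ range t, (Nat.fib (2*(t-k)-1) : ℤ) * ((m + k + 1).choose (k+1) : ℤ))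
          + (Nat.fib (2*t+1) : ℤ) := by
      rw [sum_range_succ' (fun k => (Nat.fib (2*(t+1-k)-1) : ℤ) * ((m + k).choose k : ℤ)) t]
      congr 1
      · apply sum_congr rfl; intro k hk
        have e1 : 2*(t+1-(k+1))-1 = 2*(t-k)-1 := by omega
        have e2 : m + (k+1) = m + k + 1 := by omega
        rw [e1, e2]
      · have : 2*(t+1-0)-1 = 2*t+1 := by omega
        rw [this]; simp
    have e4 : m + 2*(t+1) = m + 2*t + 2 := by omega
    rw [e4, h3]
    have e5 : 2*t+1 = 2*t + 1 := rfl
    push_cast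
    ring


lemma stepA (r : ℕ) (e : ℕ → ℤ)
    (H0 : ∀ n, ∑ j ∈ range (r+3), e j * (hfib r (n+j) : ℤ) = 0) :
    ∀ s, s ≤ r → ∀ n, ∑ j ∈ range (r+3), e j * (hfib (r - s) (n + s + j) : ℤ) = 0 := by
  intro s
  induction s with
  | zero => intro _ n; simpa using H0 n
  | succ s ih =>
    intro hs n
    have h1 := ih (by omega) (n+1)
    have h2 := ih (by omega) n
    have key : ∀ j, (hfib (r - (s+1)) (n+(s+1)+j) : ℤ)
        = (hfib (r - s) (n+1+s+j) : ℤ) - (hfib (r - s) (n+s+j) : ℤ) := by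
      intro j
      obtain ⟨t, ht⟩ : ∃ t, r - s = t + 1 := ⟨r - (s+1), by omega⟩
      rw [ht, show r - (s+1) = t from by omega]
      have h := hfib_step t (n+s+j)
      have e1 : n+1+s+j = n+s+j+1 := by omega
      have e2 : n+(s+1)+j = n+s+j+1 := by omega
      rw [e1, e2, h]; push_cast; ring
    have : ∑ j ∈ range (r+3), e j * (hfib (r-(s+1)) (n+(s+1)+j) : ℤ)
        = (∑ j ∈ range (r+3), e j * (hfib (r-s) (n+1+s+j) : ℤ))
          - ∑ j ∈ range (r+3), e j * (hfib (r-s) (n+s+j) : ℤ) := by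
      rw [← sum_sub_distrib]; apply sum_congr rfl; intro j _; rw [key j]; ring
    rw [this, h2]
    have e3 : ∀ j:ℕ, n+1+s+j = (n+1)+s+j := fun j => by omega
    rw [show (∑ j ∈ range (r+3), e j * (hfib (r-s) (n+1+s+j) : ℤ))
        = ∑ j ∈ range (r+3), e j * (hfib (r-s) ((n+1)+s+j) : ℤ) from by
      apply sum_congr rfl; intro j _; rw [e3 j]]
    rw [h1]; ring

lemma stepB (r : ℕ) (e : ℕ → ℤ)
    (HF : ∀ n, ∑ j ∈ range (r+3), e j * (Nat.fib (n + r + j) : ℤ) = 0) :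
    ∀ m, ∑ j ∈ range (r+3), e j * (Nat.fib (m + j) : ℤ) = 0 := by
  have key : ∀ k m, r ≤ m + k → ∑ j ∈ range (r+3), e j * (Nat.fib (m + j) : ℤ) = 0 := by
    intro k
    induction k with
    | zero =>
      intro m hm
      obtain ⟨n, rfl⟩ : ∃ n, m = n + r := ⟨m - r, by omega⟩
      exact HF n
    | succ k ih =>
      intro m hm
      by_cases h : r ≤ m + k
      · exact ih m h
      · have h1 := ih (m+1) (by omega)
        have h2 := ih (m+2) (by omega)
        have keyf : ∀ j:ℕ, (Nat.fib (m+j) : ℤ) = (Nat.fib (m+2+j) : ℤ) - (Nat.fib (m+1+j) : ℤ) := by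
          intro j
          have h := Nat.fib_add_two (n := m + j)
          have e1 : m+2+j = m+j+2 := by omega
          have e2 : m+1+j = m+j+1 := by omega
          rw [e1, e2, h]; push_cast; ring
        have : ∑ j ∈ range (r+3), e j * (Nat.fib (m+j) : ℤ)
            = (∑ j ∈ range (r+3), e j * (Nat.fib (m+2+j) : ℤ))
              - ∑ j ∈ range (r+3), e j * (Nat.fib (m+1+j) : ℤ) := by
          rw [← sum_sub_distrib]; apply sum_congr rfl; intro j _; rw [keyf j]; ring
        rw [this, h1, h2]; ring
  intro m; exact key r m (by omega)

lemma stepC (r : ℕ) (e : ℕ → ℤ)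
    (HA : ∀ s, s ≤ r → ∀ n, ∑ j ∈ range (r+3), e j * (hfib (r - s) (n + s + j) : ℤ) = 0)
    (HB : ∀ m, ∑ j ∈ range (r+3), e j * (Nat.fib (m + j) : ℤ) = 0) :
    ∀ k, k < r → ∀ m, ∑ j ∈ range (r+3), e j * ((m + j).choose k : ℤ) = 0 := by
  intro k
  induction k using Nat.strong_induction_on with
  | _ k ih =>
  intro hk
  have base : ∀ n, ∑ j ∈ range (r+3), e j * (((n + (r-1)) + j).choose k : ℤ) = 0 := by
    intro n
    have hA := HA (r - (k+1)) (by omega) n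
    rw [show r - (r - (k+1)) = k + 1 from by omega] at hA
    set s := r - (k+1) with hs
    have expand : ∀ j:ℕ, (hfib (k+1) (n + s + j) : ℤ)
        = (Nat.fib ((n + s + 2*(k+1)) + j) : ℤ)
          - ∑ k' ∈ range (k+1), (Nat.fib (2*(k+1-k')-1) : ℤ) * (((n + s + k') + j).choose k' : ℤ) := by
      intro j
      rw [hfib_closed (k+1) (n+s+j)]
      congr 1
      · rw [show n + s + j + 2*(k+1) = (n + s + 2*(k+1)) + j from by omega]
      · apply sum_congr rfl; intro k' _
        rw [show n + s + j + k' = (n + s + k') + j from by omega]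
    have hsplit : ∑ j ∈ range (r+3), e j * (hfib (k+1) (n + s + j) : ℤ)
        = (∑ j ∈ range (r+3), e j * (Nat.fib ((n + s + 2*(k+1)) + j) : ℤ))
          - ∑ j ∈ range (r+3), e j *
              ∑ k' ∈ range (k+1), (Nat.fib (2*(k+1-k')-1) : ℤ) * (((n + s + k') + j).choose k' : ℤ) := by
      rw [← sum_sub_distrib]; apply sum_congr rfl; intro j _; rw [expand j]; ring
    rw [hsplit, HB (n + s + 2*(k+1))] at hA
    have hswap : ∑ j ∈ range (r+3), e j *
          ∑ k' ∈ range (k+1), (Nat.fib (2*(k+1-k')-1) : ℤ) * (((n + s + k') + j).choose k' : ℤ)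
        = ∑ k' ∈ range (k+1), (Nat.fib (2*(k+1-k')-1) : ℤ) *
            ∑ j ∈ range (r+3), e j * (((n + s + k') + j).choose k' : ℤ) := by
      simp_rw [mul_sum]
      rw [sum_comm]
      apply sum_congr rfl; intro k' _
      apply sum_congr rfl; intro j _; ring
    rw [hswap] at hA
    rw [sum_range_succ] at hA
    have hlow : ∑ k' ∈ range k, (Nat.fib (2*(k+1-k')-1) : ℤ) *
        ∑ j ∈ range (r+3), e j * (((n + s + k') + j).choose k' : ℤ) = 0 := by
      apply sum_eq_zero; intro k' hk'
      have hk2 := mem_range.mp hk'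
      rw [ih k' hk2 (by omega) (n + s + k')]; ring
    rw [hlow, show 2*(k+1-k)-1 = 1 from by omega] at hA
    simp only [Nat.fib_one, Nat.cast_one, one_mul, zero_add, zero_sub, neg_eq_zero] at hA
    rw [show n + (r-1) = n + s + k from by omega]
    exact hA
  rcases Nat.eq_zero_or_pos k with rfl | hkpos
  · intro m
    have h0 := base 0
    simpa using h0
  · obtain ⟨k2, rfl⟩ : ∃ k2, k = k2 + 1 := ⟨k-1, by omega⟩
    have down : ∀ t m, r - 1 ≤ m + t → ∑ j ∈ range (r+3), e j * ((m + j).choose (k2+1) : ℤ) = 0 := by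
      intro t
      induction t with
      | zero =>
        intro m hm
        obtain ⟨n, rfl⟩ : ∃ n, m = n + (r-1) := ⟨m - (r-1), by omega⟩
        exact base n
      | succ t iht =>
        intro m hm
        by_cases h : r - 1 ≤ m + t
        · exact iht m h
        · have h1 := iht (m+1) (by omega)
          have h2 := ih k2 (by omega) (by omega) m
          have keyc : ∀ j:ℕ, ((m+j).choose (k2+1) : ℤ)
              = ((m+1+j).choose (k2+1) : ℤ) - ((m+j).choose k2 : ℤ) := by
            intro j
            have hp := Nat.choose_succ_succ (m+j) k2
            rw [show m+1+j = m+j+1 from by omega, hp]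
            push_cast; ring
          have : ∑ j ∈ range (r+3), e j * ((m+j).choose (k2+1) : ℤ)
              = (∑ j ∈ range (r+3), e j * ((m+1+j).choose (k2+1) : ℤ))
                - ∑ j ∈ range (r+3), e j * ((m+j).choose k2 : ℤ) := by
            rw [← sum_sub_distrib]; apply sum_congr rfl; intro j _; rw [keyc j]; ring
          rw [this, h1, h2]; ring
    intro m
    exact down (r-1) m (by omega)

def uu (r s j : ℕ) : ℤ := if j < s then 0 else (-1)^j * (r.choose (j - s) : ℤ)

lemma uu_of_ge {s j : ℕ} (r : ℕ) (h : s ≤ j) : uu r s j = (-1)^j * (r.choose (j - s) : ℤ) :=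
  if_neg (by omega)

lemma uu_of_lt {s j : ℕ} (r : ℕ) (h : j < s) : uu r s j = 0 := if_pos h

lemma uu_sum0 (r : ℕ) (X : ℕ → ℤ) :
    ∑ j ∈ range (r+3), uu r 0 j * X j
      = ∑ i ∈ range (r+1), (-1:ℤ)^i * (r.choose i : ℤ) * X i := by
  rw [sum_range_succ, sum_range_succ]
  have h1 : uu r 0 (r+2) = 0 := by
    rw [uu_of_ge r (by omega)]
    rw [Nat.choose_eq_zero_of_lt (by omega)]; ring
  have h2 : uu r 0 (r+1) = 0 := by
    rw [uu_of_ge r (by omega)]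
    rw [Nat.choose_eq_zero_of_lt (by omega)]; ring
  rw [h1, h2]
  have h3 : ∀ j ∈ range (r+1), uu r 0 j * X j = (-1:ℤ)^j * (r.choose j : ℤ) * X j := by
    intro j _
    rw [uu_of_ge r (by omega), Nat.sub_zero]
  rw [sum_congr rfl h3]; ring

lemma uu_sum1 (r : ℕ) (X : ℕ → ℤ) :
    ∑ j ∈ range (r+3), uu r 1 j * X j
      = - ∑ i ∈ range (r+1), (-1:ℤ)^i * (r.choose i : ℤ) * X (i+1) := by
  rw [sum_range_succ' (fun j => uu r 1 j * X j) (r+2)]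
  have h0 : uu r 1 0 * X 0 = 0 := by rw [uu_of_lt r (by omega)]; ring
  rw [h0, add_zero, sum_range_succ]
  have h1 : uu r 1 (r+1+1) = 0 := by
    rw [uu_of_ge r (by omega)]
    rw [show r+1+1-1 = r+1 from by omega, Nat.choose_eq_zero_of_lt (by omega)]; ring
  rw [h1]
  have h3 : ∀ i ∈ range (r+1), uu r 1 (i+1) * X (i+1)
      = -((-1:ℤ)^i * (r.choose i : ℤ) * X (i+1)) := by
    intro i _
    rw [uu_of_ge r (by omega), show i+1-1 = i from by omega, pow_succ]; ring
  rw [sum_congr rfl h3, sum_neg_distrib]; ring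

lemma uu_sum2 (r : ℕ) (X : ℕ → ℤ) :
    ∑ j ∈ range (r+3), uu r 2 j * X j
      = ∑ i ∈ range (r+1), (-1:ℤ)^i * (r.choose i : ℤ) * X (i+2) := by
  rw [sum_range_succ' (fun j => uu r 2 j * X j) (r+2)]
  have h0 : uu r 2 0 * X 0 = 0 := by rw [uu_of_lt r (by omega)]; ring
  rw [h0, add_zero]
  rw [sum_range_succ' (fun i => uu r 2 (i+1) * X (i+1)) (r+1)]
  have h1 : uu r 2 (0+1) * X (0+1) = 0 := by rw [uu_of_lt r (by omega)]; ring
  rw [h1, add_zero]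
  have h3 : ∀ i ∈ range (r+1), uu r 2 (i+1+1) * X (i+1+1)
      = (-1:ℤ)^i * (r.choose i : ℤ) * X (i+2) := by
    intro i _
    rw [uu_of_ge r (by omega), show i+1+1-2 = i from by omega,
      show i+1+1 = i+2 from by omega, pow_add, neg_one_sq]
    ring
  rw [sum_congr rfl h3]
lemma ch2 (r : ℕ) : (r.choose 2 : ℤ) * 2 = r * (r - 1) := by
  induction r with
  | zero => simp
  | succ n ih =>
    rw [Nat.choose_succ_succ n 1]
    push_cast [Nat.choose_one_right]
    push_cast at ih
    linear_combination ih

lemma ch3 (r : ℕ) : (r.choose 3 : ℤ) * 6 = r * (r - 1) * (r - 2) := by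
  induction r with
  | zero => simp
  | succ n ih =>
    rw [Nat.choose_succ_succ n 2]
    push_cast
    push_cast at ih
    linear_combination ih + 3 * ch2 n

/-- for `r ≥ 3`, the last three entries of the bottom row of the
companion `Q`-matrix of `F^{(r)}` are `r+1`, `1 - C(r+1,2)` and `(r³-7r)/6`. -/
theorem stmt_10 (r : ℕ) (hr : 3 ≤ r) (Q : Matrix (Fin (r + 2)) (Fin (r + 2)) ℤ)
    (hcomp : ∀ i j : Fin (r + 2), (i : ℕ) ≤ r →
      Q i j = if (j : ℕ) = (i : ℕ) + 1 then 1 else 0)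
    (hrec : ∀ n : ℕ, ∀ i : Fin (r + 2),
      (hfib r (n + 1 + i) : ℤ) = ∑ j : Fin (r + 2), Q i j * hfib r (n + j)) :
    Q ⟨r + 1, by omega⟩ ⟨r + 1, by omega⟩ = (r : ℤ) + 1 ∧
    Q ⟨r + 1, by omega⟩ ⟨r, by omega⟩ = 1 - (Nat.choose (r + 1) 2 : ℤ) ∧
    Q ⟨r + 1, by omega⟩ ⟨r - 1, by omega⟩ = ((r : ℤ) ^ 3 - 7 * r) / 6 := by
  have hi0 : r + 1 < r + 2 := by omega
  obtain ⟨i0, hi0def⟩ : ∃ i0 : Fin (r+2), i0 = ⟨r+1, hi0⟩ := ⟨_, rfl⟩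
  obtain ⟨e, hedef⟩ : ∃ e : ℕ → ℤ, e = fun j => if h : j < r + 2 then Q i0 ⟨j, h⟩ else -1 := ⟨_, rfl⟩
  have he_top : e (r+2) = -1 := by simp only [hedef]; rw [dif_neg (by omega)]
  have he_in : ∀ (j : ℕ) (h : j < r+2), e j = Q i0 ⟨j, h⟩ := by
    intro j h; simp only [hedef]; rw [dif_pos h]
  have H0 : ∀ n, ∑ j ∈ range (r+3), e j * (hfib r (n+j) : ℤ) = 0 := by
    intro n
    rw [show r+3 = (r+2)+1 from rfl, sum_range_succ, he_top]
    have hsum : ∑ j ∈ range (r+2), e j * (hfib r (n+j) : ℤ)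
        = ∑ j : Fin (r+2), Q i0 j * (hfib r (n + (j:ℕ)) : ℤ) := by
      rw [← Fin.sum_univ_eq_sum_range (fun j => e j * (hfib r (n+j) : ℤ)) (r+2)]
      apply Finset.sum_congr rfl
      intro j _
      rw [he_in j.1 j.2]
    rw [hsum, ← hrec n i0]
    rw [show (i0:ℕ) = r+1 from by rw [hi0def], show n + 1 + (r+1) = n + (r+2) from by omega]
    ring
  have HA := stepA r e H0
  have HF : ∀ n, ∑ j ∈ range (r+3), e j * (Nat.fib (n + r + j) : ℤ) = 0 := by
    intro n
    have h := HA r le_rfl n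
    simp only [Nat.sub_self] at h
    simpa [hfib] using h
  have HB := stepB r e HF
  have HC := stepC r e HA HB
  -- binomial symmetry facts
  have hc1 : r.choose (r-1) = r := by
    have h := Nat.choose_symm (show 1 ≤ r by omega)
    rw [h, Nat.choose_one_right]
  have hc2 : r.choose (r-2) = r.choose 2 := Nat.choose_symm (by omega)
  have hc3 : r.choose (r-3) = r.choose 3 := Nat.choose_symm (by omega)
  have hsq : (-1:ℤ)^r * (-1:ℤ)^r = 1 := by
    rw [← pow_add]; exact Even.neg_one_pow ⟨r, rfl⟩
  obtain ⟨γ, hγ⟩ : ∃ g : ℤ, g = (-1:ℤ)^r * e (r+2) := ⟨_, rfl⟩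
  obtain ⟨β, hβ⟩ : ∃ b : ℤ, b = -((-1:ℤ)^r * e (r+1)) - (r:ℤ) * γ := ⟨_, rfl⟩
  obtain ⟨α, hα⟩ : ∃ a : ℤ, a = (-1:ℤ)^r * e r - (r:ℤ) * β - (r.choose 2 : ℤ) * γ := ⟨_, rfl⟩
  obtain ⟨f, hf⟩ : ∃ f : ℕ → ℤ, f = fun j => e j - (α * uu r 0 j + β * uu r 1 j + γ * uu r 2 j) := ⟨_, rfl⟩
  -- uu values
  have hpm : (-1:ℤ)^(r-1) = -(-1:ℤ)^r := by
    conv_rhs => rw [show r = (r-1)+1 from by omega]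
    rw [pow_succ]; ring
  have v0r2 : uu r 0 (r+2) = 0 := by
    rw [uu_of_ge r (by omega), Nat.sub_zero, Nat.choose_eq_zero_of_lt (by omega)]; ring
  have v1r2 : uu r 1 (r+2) = 0 := by
    rw [uu_of_ge r (by omega), show r+2-1 = r+1 from by omega,
      Nat.choose_eq_zero_of_lt (by omega)]; ring
  have v2r2 : uu r 2 (r+2) = (-1:ℤ)^r := by
    rw [uu_of_ge r (by omega), show r+2-2 = r from by omega, Nat.choose_self,
      pow_add, neg_one_sq]; ring
  have v0r1 : uu r 0 (r+1) = 0 := by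
    rw [uu_of_ge r (by omega), Nat.sub_zero, Nat.choose_eq_zero_of_lt (by omega)]; ring
  have v1r1 : uu r 1 (r+1) = -(-1:ℤ)^r := by
    rw [uu_of_ge r (by omega), show r+1-1 = r from by omega, Nat.choose_self, pow_succ]; ring
  have v2r1 : uu r 2 (r+1) = -((-1:ℤ)^r * r) := by
    rw [uu_of_ge r (by omega), show r+1-2 = r-1 from by omega, hc1, pow_succ]; ring
  have v0r : uu r 0 r = (-1:ℤ)^r := by
    rw [uu_of_ge r (by omega), Nat.sub_zero, Nat.choose_self]; ring
  have v1r : uu r 1 r = (-1:ℤ)^r * r := by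
    rw [uu_of_ge r (by omega), hc1]
  have v2r : uu r 2 r = (-1:ℤ)^r * (r.choose 2 : ℤ) := by
    rw [uu_of_ge r (by omega), hc2]
  have v0p : uu r 0 (r-1) = -((-1:ℤ)^r * r) := by
    rw [uu_of_ge r (by omega), Nat.sub_zero, hc1, hpm]; ring
  have v1p : uu r 1 (r-1) = -((-1:ℤ)^r * (r.choose 2 : ℤ)) := by
    rw [uu_of_ge r (by omega), show r-1-1 = r-2 from by omega, hc2, hpm]; ring
  have v2p : uu r 2 (r-1) = -((-1:ℤ)^r * (r.choose 3 : ℤ)) := by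
    rw [uu_of_ge r (by omega), show r-1-2 = r-3 from by omega, hc3, hpm]; ring
  -- f vanishes at the top three indices
  have fa1 : f (r+2) = 0 := by
    simp only [hf]
    rw [v0r2, v1r2, v2r2, hγ]
    linear_combination (-(e (r+2))) * hsq
  have fa2 : f (r+1) = 0 := by
    simp only [hf]
    rw [v0r1, v1r1, v2r1]
    linear_combination ((-1:ℤ)^r) * hβ + (-(e (r+1))) * hsq
  have fa3 : f r = 0 := by
    simp only [hf]
    rw [v0r, v1r, v2r]
    linear_combination (-(-1:ℤ)^r) * hα + (-(e r)) * hsq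
  -- f is orthogonal to binomial rows
  have Pk : ∀ k, k < r → ∑ j ∈ range (r+3), f j * ((j).choose k : ℤ) = 0 := by
    intro k hk
    have h1 := HC k hk 0
    simp only [zero_add] at h1
    have hX0 := uu_sum0 r (fun j => (j.choose k : ℤ))
    have hX1 := uu_sum1 r (fun j => (j.choose k : ℤ))
    have hX2 := uu_sum2 r (fun j => (j.choose k : ℤ))
    have g0 := chooseG r k 0 hk
    simp only [Nat.add_zero] at g0
    have g1 := chooseG r k 1 hk
    have g2 := chooseG r k 2 hk
    rw [g0] at hX0
    rw [g1] at hX1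
    rw [g2] at hX2
    have expand : ∑ j ∈ range (r+3), f j * ((j).choose k : ℤ)
        = (∑ j ∈ range (r+3), e j * ((j).choose k : ℤ))
          - (α * ∑ j ∈ range (r+3), uu r 0 j * ((j).choose k : ℤ)
             + β * ∑ j ∈ range (r+3), uu r 1 j * ((j).choose k : ℤ)
             + γ * ∑ j ∈ range (r+3), uu r 2 j * ((j).choose k : ℤ)) := by
      rw [mul_sum, mul_sum, mul_sum, ← sum_add_distrib, ← sum_add_distrib, ← sum_sub_distrib]
      apply sum_congr rfl; intro j _
      simp only [hf]; ring
    rw [expand, h1, hX0, hX1, hX2]; ring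
  -- downward induction: f vanishes everywhere
  have fzero : ∀ t (j : ℕ), j ≤ r+2 → r+2 ≤ j + t → f j = 0 := by
    intro t
    induction t with
    | zero =>
      intro j h1 h2
      rw [show j = r+2 from by omega]; exact fa1
    | succ t iht =>
      intro j h1 h2
      by_cases hc : r + 2 ≤ j + t
      · exact iht j h1 hc
      · by_cases hj : r ≤ j
        · have : j = r ∨ j = r+1 ∨ j = r+2 := by omega
          rcases this with rfl | rfl | rfl
          exacts [fa3, fa2, fa1]
        · have hP := Pk j (by omega)
          have hsingle : ∑ b ∈ range (r+3), f b * ((b).choose j : ℤ)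
              = f j * ((j).choose j : ℤ) := by
            apply Finset.sum_eq_single_of_mem j (mem_range.mpr (by omega))
            intro b hb hbj
            rcases lt_or_gt_of_ne hbj with hlt | hgt
            · rw [Nat.choose_eq_zero_of_lt hlt]; push_cast; ring
            · rw [iht b (by have := mem_range.mp hb; omega) (by omega)]; ring
          rw [hsingle, Nat.choose_self] at hP
          simpa using hP
  have ecombo : ∀ j : ℕ, j ≤ r+2 → e j = α * uu r 0 j + β * uu r 1 j + γ * uu r 2 j := by
    intro j hj
    have h := fzero (r+2) j hj (by omega)
    simp only [hf] at h
    linarith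
  -- fibonacci relations pin down the scalars
  have EqM : ∀ m', (-1:ℤ)^r * (α * (Nat.fib m' : ℤ) - β * (Nat.fib (m'+1) : ℤ)
      + γ * (Nat.fib (m'+2) : ℤ)) = 0 := by
    intro m'
    have h := HB (r + m')
    have hcom : ∑ j ∈ range (r+3), e j * (Nat.fib (r + m' + j) : ℤ)
        = α * (∑ j ∈ range (r+3), uu r 0 j * (Nat.fib (r+m'+j) : ℤ))
          + β * (∑ j ∈ range (r+3), uu r 1 j * (Nat.fib (r+m'+j) : ℤ))
          + γ * (∑ j ∈ range (r+3), uu r 2 j * (Nat.fib (r+m'+j) : ℤ)) := by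
      rw [mul_sum, mul_sum, mul_sum, ← sum_add_distrib, ← sum_add_distrib]
      apply sum_congr rfl; intro j hj
      rw [ecombo j (by have := mem_range.mp hj; omega)]; ring
    rw [hcom] at h
    rw [uu_sum0 r (fun j => (Nat.fib (r+m'+j) : ℤ)),
        uu_sum1 r (fun j => (Nat.fib (r+m'+j) : ℤ)),
        uu_sum2 r (fun j => (Nat.fib (r+m'+j) : ℤ))] at h
    have r0 := fibG r m'
    have r1 : ∑ i ∈ range (r+1), (-1:ℤ)^i * (r.choose i : ℤ) * (Nat.fib (r+m'+(i+1)) : ℤ)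
        = (-1:ℤ)^r * (Nat.fib (m'+1) : ℤ) := by
      rw [← fibG r (m'+1)]
      apply sum_congr rfl; intro i _
      rw [show r+m'+(i+1) = r+(m'+1)+i from by omega]
    have r2 : ∑ i ∈ range (r+1), (-1:ℤ)^i * (r.choose i : ℤ) * (Nat.fib (r+m'+(i+2)) : ℤ)
        = (-1:ℤ)^r * (Nat.fib (m'+2) : ℤ) := by
      rw [← fibG r (m'+2)]
      apply sum_congr rfl; intro i _
      rw [show r+m'+(i+2) = r+(m'+2)+i from by omega]
    rw [r0, r1, r2] at h
    linear_combination h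
  have hfib3 : Nat.fib 3 = 2 := by decide
  have E0' : (-1:ℤ)^r * (γ - β) = 0 := by
    have h := EqM 0
    norm_num at h
    linear_combination ((-1:ℤ)^r) * h
  have E1' : (-1:ℤ)^r * (α - β + 2*γ) = 0 := by
    have h := EqM 1
    norm_num [hfib3] at h
    linear_combination ((-1:ℤ)^r) * h
  have hγv : γ = -(-1:ℤ)^r := by rw [hγ, he_top]; ring
  have hβv : β = -(-1:ℤ)^r := by
    rw [← hγv]
    linear_combination (γ - β) * hsq + (-((-1:ℤ)^r)) * E0'
  have E2 : (-1:ℤ)^r * (α + γ) = 0 := by linear_combination E1' - E0'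
  have hαv : α = (-1:ℤ)^r := by
    have E2' : (-1:ℤ)^r * α - (-1:ℤ)^r * (-1:ℤ)^r = 0 := by
      rw [hγv] at E2; linear_combination E2
    have E2'' : (-1:ℤ)^r * α = 1 := by linear_combination E2' + hsq
    linear_combination ((-1:ℤ)^r) * E2'' + (-α) * hsq
  -- extract the three entries
  have T1 : e (r+1) = (r:ℤ) + 1 := by
    have h := hβ
    rw [hβv, hγv] at h
    linear_combination ((-1:ℤ)^r) * h + ((r:ℤ) + 1 - e (r+1)) * hsq
  have T2 : e r = 1 - (r:ℤ) - (r.choose 2 : ℤ) := by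
    have h := hα
    rw [hαv, hβv, hγv] at h
    linear_combination (-(-1:ℤ)^r) * h + (1 - (r:ℤ) - (r.choose 2 : ℤ) - e r) * hsq
  have T3 : e (r-1) = (r.choose 2 : ℤ) + (r.choose 3 : ℤ) - r := by
    have h := ecombo (r-1) (by omega)
    rw [v0p, v1p, v2p, hαv, hβv, hγv] at h
    linear_combination h + ((r.choose 2 : ℤ) + (r.choose 3 : ℤ) - r) * hsq
  refine ⟨?_, ?_, ?_⟩
  · have h := he_in (r+1) (by omega)
    rw [h, hi0def] at T1
    exact T1
  · have h := he_in r (by omega)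
    rw [h, hi0def] at T2
    have hcr : ((r+1).choose 2 : ℤ) = r + (r.choose 2 : ℤ) := by
      rw [Nat.choose_succ_succ r 1, Nat.choose_one_right]; push_cast; ring
    rw [T2, hcr]; ring
  · have h := he_in (r-1) (by omega)
    rw [h, hi0def] at T3
    have h6 : ((r:ℤ)^3 - 7*r) = 6 * ((r.choose 2 : ℤ) + (r.choose 3 : ℤ) - r) := by
      linear_combination (-3) * ch2 r - ch3 r
    rw [h6, Int.mul_ediv_cancel_left _ (by norm_num : (6:ℤ) ≠ 0)]
    exact T3
end

section
/- For every n ≥ 0, the determinant of the 3×3 integer matrix whose (i,j) entry is F_{n+i+j} − 1 (0 ≤ i, j ≤ 2), i.e. the matrix with rows (F_n−1, F_{n+1}−1, F_{n+2}−1), (F_{n+1}−1, F_{n+2}−1, F_{n+3}−1), (F_{n+2}−1, F_{n+3}−1, F_{n+4}−1), equals (−1)^n. -/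
lemma cassini (n : ℕ) : (Nat.fib (n+1) : ℤ)^2 - Nat.fib (n+1) * Nat.fib n - (Nat.fib n)^2 = (-1)^n := by
  induction n with
  | zero => simp
  | succ k ih =>
    rw [Nat.fib_add_two]
    push_cast
    push_cast at ih
    ring_nf
    ring_nf at ih
    linarith [ih]

/-- the 3×3 determinant with `(i,j)` entry `F_{n+i+j} - 1`
equals `(-1)^n`. -/
theorem stmt_12 (n : ℕ) :
    (Matrix.of fun i j : Fin 3 => (Nat.fib (n + i + j) : ℤ) - 1).det = (-1) ^ n := by
  have h := cassini n
  rw [Matrix.det_fin_three]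
  simp only [Matrix.of_apply, Fin.val_zero, Fin.val_one, Fin.val_two]
  have e2 : n + 2 = (n+1) + 1 := by ring
  have e3 : n + 1 + 2 = (n+2) + 1 := by ring
  have e4 : n + 2 + 2 = (n+3) + 1 := by ring
  simp only [Nat.add_zero, show n+0+1 = n+1 from rfl, show n+0+2 = n+2 from rfl,
    show n+1+0 = n+1 from rfl, show n+1+1 = n+2 from rfl, show n+1+2 = n+3 from rfl,
    show n+2+0 = n+2 from rfl, show n+2+1 = n+3 from rfl, show n+2+2 = n+4 from rfl]
  have f2 : (Nat.fib (n+2) : ℤ) = Nat.fib (n+1) + Nat.fib n := by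
    rw [Nat.fib_add_two]; push_cast; ring
  have f3 : (Nat.fib (n+3) : ℤ) = Nat.fib (n+1) * 2 + Nat.fib n := by
    rw [show n+3 = (n+1)+2 from rfl, Nat.fib_add_two, Nat.fib_add_two]; push_cast; ring
  have f4 : (Nat.fib (n+4) : ℤ) = Nat.fib (n+1) * 3 + Nat.fib n * 2 := by
    rw [show n+4 = (n+2)+2 from rfl, Nat.fib_add_two]; push_cast; rw [f2, f3]; ring
  rw [f2, f3, f4]
  linear_combination h
end

section
/- For every r ≥ 1, the determinant of the (r+2)×(r+2) integer matrix A_{r,0} with (i,j) entry F^{(r)}_{i+j} for 0 ≤ i, j ≤ r+1 equals (−1)^{⌊(r+3)/2⌋}. -/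
/-!
The binomial transform `f ↦ (m ↦ Δᵐ f 0)` preserves Hankel determinants. For `f = F^{(r)}` the
Fibonacci defect `E f n = f (n + 2) - f (n + 1) - f n` satisfies `Δ (E F^{(s+1)}) = E F^{(s)} (· + 1)`
with `E F^{(0)} = 0` and `E F^{(1)} = 1`, so `Δᵐ (E f)` vanishes for `m ≥ r` and is `1` at
`m = r - 1`; moreover `Δ^{2r} f = F`. After the column operations `Cⱼ ↦ Cⱼ - Cⱼ₊₁ - Cⱼ₊₂`
(`j < r`) the transformed Hankel matrix becomes block upper triangular, with an `r × r` Hankel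
block that is anti-triangular with antidiagonal `-1` and the `2 × 2` block `!![0, 1; 1, -1]`,
so the determinant is `(-1) ^ (r / 2) * (-1) ^ r * (-1)`.
-/

open Finset Matrix fwdDiff

section FibDefect

variable {G : Type*} [AddCommGroup G]

def fibDefect (f : ℕ → G) (n : ℕ) : G := f (n + 2) - f (n + 1) - f n

theorem fibDefect_comp_add (f : ℕ → G) (m : ℕ) :
    fibDefect (fun n => f (n + m)) = fun n => fibDefect f (n + m) := by
  funext n
  simp only [fibDefect, add_right_comm]

theorem fwdDiff_iter_fibDefect (f : ℕ → G) (m : ℕ) :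
    Δ_[1] ^[m] (fibDefect f) = fibDefect (Δ_[1] ^[m] f) := by
  refine Function.Commute.iterate_left (fun g => ?_) m f
  funext n
  simp only [fwdDiff, fibDefect]
  abel

theorem fwdDiff_iter_sub_sub_eq_neg_fibDefect (f : ℕ → G) (m : ℕ) :
    Δ_[1] ^[m] f 0 - Δ_[1] ^[m + 1] f 0 - Δ_[1] ^[m + 2] f 0 = -Δ_[1] ^[m] (fibDefect f) 0 := by
  rw [Function.iterate_succ_apply', Function.iterate_succ_apply', Function.iterate_succ_apply',
    fwdDiff_iter_fibDefect]
  simp only [fwdDiff, fibDefect]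
  abel

end FibDefect

namespace Matrix

variable {R : Type*} [CommRing R]

def hankel (n : ℕ) (f : ℕ → R) : Matrix (Fin n) (Fin n) R :=
  of fun i j => f (i + j)

variable (R) in
def fwdDiffMatrix (n : ℕ) : Matrix (Fin n) (Fin n) R :=
  of fun i k => (-1) ^ ((i : ℕ) - k) * ((i : ℕ).choose k : R)

theorem det_fwdDiffMatrix (n : ℕ) : (fwdDiffMatrix R n).det = 1 := by
  have h : (fwdDiffMatrix R n).IsLowerTriangular :=
    fun i k hik => by simp [fwdDiffMatrix, Nat.choose_eq_zero_of_lt (show (i : ℕ) < k from hik)]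
  rw [det_of_isLowerTriangular _ h]
  exact prod_eq_one fun i _ => by simp [fwdDiffMatrix]

theorem sum_fwdDiffMatrix_mul {n : ℕ} (g : ℕ → R) (i : Fin n) :
    ∑ k, fwdDiffMatrix R n i k * g k = Δ_[1] ^[i] g 0 := by
  simp only [fwdDiffMatrix, of_apply]
  rw [fwdDiff_iter_eq_sum_shift, Fin.sum_univ_eq_sum_range
    (fun k => (-1) ^ ((i : ℕ) - k) * ((i : ℕ).choose k : R) * g k)]
  refine (sum_subset (range_subset_range.2 i.isLt) fun k _ hk => ?_).symm.trans
    (sum_congr rfl fun k _ => ?_)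
  · rw [Nat.choose_eq_zero_of_lt (by simpa using hk)]
    simp
  · simp

theorem fwdDiffMatrix_mul_hankel_mul_transpose (n : ℕ) (f : ℕ → R) :
    fwdDiffMatrix R n * hankel n f * (fwdDiffMatrix R n)ᵀ = hankel n fun m => Δ_[1] ^[m] f 0 := by
  have hrow (i l : Fin n) : (fwdDiffMatrix R n * hankel n f) i l = Δ_[1] ^[i] f l := by
    simp only [mul_apply, hankel, of_apply]
    rw [sum_fwdDiffMatrix_mul (fun k => f (k + l)), fwdDiff_iter_comp_add, zero_add]
  ext i j
  simp only [mul_apply, hrow, transpose_apply, mul_comm (Δ_[1] ^[i] f _)]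
  rw [sum_fwdDiffMatrix_mul, hankel, of_apply, add_comm, Function.iterate_add_apply]

theorem det_hankel_fwdDiff_iter (n : ℕ) (f : ℕ → R) :
    (hankel n fun m => Δ_[1] ^[m] f 0).det = (hankel n f).det := by
  rw [← fwdDiffMatrix_mul_hankel_mul_transpose, det_mul, det_mul, det_transpose,
    det_fwdDiffMatrix, one_mul, mul_one]

theorem det_hankel_of_eq_zero (n : ℕ) (c : ℕ → R) (hc : ∀ m, n ≤ m → m + 1 < 2 * n → c m = 0) :
    (hankel n c).det = (-1) ^ (n / 2) * c (n - 1) ^ n := by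
  induction n generalizing c with
  | zero => simp
  | succ n ih =>
    have hminor : (hankel (n + 1) c).submatrix (Fin.last n).succAbove (0 : Fin (n + 1)).succAbove =
        hankel n fun m => c (m + 1) := by
      ext i j
      simp only [hankel, submatrix_apply, of_apply, Fin.succAbove_last, Fin.succAbove_zero,
        Fin.val_castSucc, Fin.val_succ, add_assoc]
    have hlastRow (j : Fin (n + 1)) (hj : j ≠ 0) : hankel (n + 1) c (Fin.last n) j = 0 := by
      have : (j : ℕ) ≠ 0 := Fin.val_ne_of_ne hj
      exact hc _ (by rw [Fin.val_last]; omega) (by rw [Fin.val_last]; omega)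
    rw [det_succ_row _ (Fin.last n), sum_eq_single 0 (fun j _ hj => by simp [hlastRow j hj])
      (by simp), hminor, ih _ fun m h1 h2 => hc _ (by omega) (by omega)]
    rcases n with _ | n
    · simp [hankel]
    · simp only [hankel, of_apply, Fin.val_last, Fin.val_zero, add_zero, Nat.add_sub_cancel]
      rw [show (-1 : R) ^ ((n + 2) / 2) = (-1) ^ (n + 1) * (-1) ^ ((n + 1) / 2) by
        rw [← pow_add]
        obtain ⟨k, rfl | rfl⟩ := Nat.even_or_odd' n <;>
          exact neg_one_pow_congr (by simp only [Nat.even_iff]; omega)]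
      ring

theorem det_finAdd_of_lowerLeft_eq_zero {m n : ℕ} (M : Matrix (Fin (m + n)) (Fin (m + n)) R)
    (h : ∀ i j, M (Fin.natAdd m i) (Fin.castAdd n j) = 0) :
    M.det = (M.submatrix (Fin.castAdd n) (Fin.castAdd n)).det *
      (M.submatrix (Fin.natAdd m) (Fin.natAdd m)).det := by
  rw [← det_submatrix_equiv_self finSumFinEquiv, ← fromBlocks_toBlocks (M.submatrix _ _),
    show (M.submatrix finSumFinEquiv finSumFinEquiv).toBlocks₂₁ = 0 from ext h,
    det_fromBlocks_zero₂₁]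
  rfl

variable (R) in
def fibColumnOp (r : ℕ) : Matrix (Fin (r + 2)) (Fin (r + 2)) R :=
  of fun k j => if (k : ℕ) = j then 1
    else if (j : ℕ) < r ∧ ((k : ℕ) = j + 1 ∨ (k : ℕ) = j + 2) then -1 else 0

theorem det_fibColumnOp (r : ℕ) : (fibColumnOp R r).det = 1 := by
  have h : (fibColumnOp R r).IsLowerTriangular := fun k j hkj => by
    have : (k : ℕ) < j := hkj
    simp only [fibColumnOp, of_apply]
    split_ifs <;> first | rfl | omega
  rw [det_of_isLowerTriangular _ h]
  exact prod_eq_one fun i _ => by simp [fibColumnOp]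

theorem hankel_mul_fibColumnOp_apply (r : ℕ) (d : ℕ → R) (i j : Fin (r + 2)) :
    (hankel (r + 2) d * fibColumnOp R r) i j =
      if (j : ℕ) < r then d (i + j) - d (i + j + 1) - d (i + j + 2) else d (i + j) := by
  simp only [mul_apply, hankel, fibColumnOp, of_apply]
  rw [Fin.sum_univ_eq_sum_range (fun k => d (i + k) * if k = j then 1
    else if (j : ℕ) < r ∧ (k = j + 1 ∨ k = j + 2) then -1 else 0)]
  have hj := j.isLt
  split_ifs with hjr
  · have hsplit (k : ℕ) : (d (i + k) * if k = j then 1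
        else if (j : ℕ) < r ∧ (k = j + 1 ∨ k = j + 2) then -1 else 0) =
        ((if (j : ℕ) = k then d (i + k) else 0) - (if (j : ℕ) + 1 = k then d (i + k) else 0)) -
          (if (j : ℕ) + 2 = k then d (i + k) else 0) := by
      split_ifs <;> first | omega | simp
    simp only [hsplit, sum_sub_distrib, sum_ite_eq, mem_range]
    rw [if_pos hj, if_pos (by omega), if_pos (by omega), add_assoc, add_assoc]
  · have hsingle (k : ℕ) : (d (i + k) * if k = j then 1
        else if (j : ℕ) < r ∧ (k = j + 1 ∨ k = j + 2) then -1 else 0) =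
        if (j : ℕ) = k then d (i + k) else 0 := by
      split_ifs <;> first | omega | simp
    simp only [hsingle, sum_ite_eq, mem_range, if_pos hj]

theorem det_hankel_of_sub_sub_eq_zero (r : ℕ) (d : ℕ → R)
    (hd : ∀ m, r ≤ m → m ≤ 2 * r → d m - d (m + 1) - d (m + 2) = 0) :
    (hankel (r + 2) d).det = (-1) ^ (r / 2) * (d (r - 1) - d r - d (r + 1)) ^ r *
      (hankel 2 fun k => d (2 * r + k)).det := by
  have hX := hankel_mul_fibColumnOp_apply r d
  set X := hankel (r + 2) d * fibColumnOp R r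
  have hupper : X.submatrix (Fin.castAdd 2) (Fin.castAdd 2) =
      hankel r fun m => d m - d (m + 1) - d (m + 2) := by
    ext i j
    rw [submatrix_apply, hX, Fin.val_castAdd, if_pos j.isLt]
    rfl
  have hlower : X.submatrix (Fin.natAdd r) (Fin.natAdd r) = hankel 2 fun k => d (2 * r + k) := by
    ext i j
    rw [submatrix_apply, hX, Fin.val_natAdd, if_neg (by omega), Fin.val_natAdd, hankel, of_apply]
    congr 1
    ring
  have hlowerLeft (i : Fin 2) (j : Fin r) : X (Fin.natAdd r i) (Fin.castAdd 2 j) = 0 := by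
    rw [hX, Fin.val_natAdd, Fin.val_castAdd, if_pos j.isLt]
    exact hd _ (by omega) (by omega)
  calc (hankel (r + 2) d).det = X.det := by rw [det_mul, det_fibColumnOp, mul_one]
    _ = _ := by
      rw [det_finAdd_of_lowerLeft_eq_zero X hlowerLeft, hupper, hlower,
        det_hankel_of_eq_zero r _ fun m h1 h2 => hd m h1 (by omega)]
      rcases r with _ | r
      · simp
      · simp only [Nat.add_sub_cancel, add_assoc, one_add_one_eq_two]

end Matrix

theorem fwdDiff_iter_fib_add (k : ℕ) :
    Δ_[1] ^[k] (fun n => (Nat.fib (n + k) : ℤ)) = fun n => (Nat.fib n : ℤ) := by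
  induction k with
  | zero => rfl
  | succ k ih =>
    rw [Function.iterate_succ_apply, ← ih]
    congr 1
    funext n
    rw [fwdDiff, show n + 1 + (k + 1) = n + k + 2 by ring, ← add_assoc, Nat.fib_add_two]
    push_cast
    ring

theorem fwdDiff_hfib_succ (r : ℕ) :
    Δ_[1] (fun n => (hfib (r + 1) n : ℤ)) = fun n => (hfib r (n + 1) : ℤ) := by
  funext n
  simp [fwdDiff, hfib, sum_range_succ _ (n + 1)]

theorem fwdDiff_iter_hfib (r m : ℕ) :
    Δ_[1] ^[m] (fun n => (hfib (r + m) n : ℤ)) = fun n => (hfib r (n + m) : ℤ) := by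
  induction m generalizing r with
  | zero => rfl
  | succ m ih =>
    rw [Function.iterate_succ_apply, ← add_assoc, fwdDiff_hfib_succ]
    funext n
    rw [fwdDiff_iter_comp_add 1 (fun n => (hfib (r + m) n : ℤ)), ih]
    simp only [add_assoc, add_comm 1 m]

theorem fwdDiff_iter_two_mul_hfib (r : ℕ) :
    Δ_[1] ^[2 * r] (fun n => (hfib r n : ℤ)) = fun n => (Nat.fib n : ℤ) := by
  have h := fwdDiff_iter_hfib 0 r
  rw [zero_add] at h
  rw [two_mul, Function.iterate_add_apply, h]
  exact fwdDiff_iter_fib_add r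

theorem fibDefect_hfib_zero : fibDefect (fun n => (hfib 0 n : ℤ)) = 0 := by
  funext n
  simp [fibDefect, hfib, Nat.fib_add_two]

theorem fibDefect_hfib_one : fibDefect (fun n => (hfib 1 n : ℤ)) = 1 := by
  funext n
  have h := Nat.fib_succ_eq_succ_sum (n + 1)
  simp only [hfib] at *
  simp [fibDefect, sum_range_succ _ (n + 2), sum_range_succ _ (n + 1), h]

theorem fwdDiff_iter_fibDefect_hfib (r m : ℕ) :
    Δ_[1] ^[m] (fibDefect fun n => (hfib (r + m) n : ℤ)) =
      fun n => fibDefect (fun n => (hfib r n : ℤ)) (n + m) := by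
  rw [fwdDiff_iter_fibDefect, fwdDiff_iter_hfib, fibDefect_comp_add (fun n => (hfib r n : ℤ))]

theorem fwdDiff_iter_fibDefect_hfib_of_le {r m : ℕ} (h : r ≤ m) :
    Δ_[1] ^[m] (fibDefect fun n => (hfib r n : ℤ)) = 0 := by
  obtain ⟨s, rfl⟩ := Nat.exists_eq_add_of_le h
  have h0 := fwdDiff_iter_fibDefect_hfib 0 r
  rw [zero_add, fibDefect_hfib_zero] at h0
  rw [add_comm, Function.iterate_add_apply, h0]
  exact Function.iterate_fixed (fwdDiff_const 1 0) s

theorem fwdDiff_iter_fibDefect_hfib_succ (r : ℕ) :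
    Δ_[1] ^[r] (fibDefect fun n => (hfib (r + 1) n : ℤ)) = 1 := by
  rw [add_comm, fwdDiff_iter_fibDefect_hfib, fibDefect_hfib_one]
  rfl

theorem stmt_14_general (r : ℕ) :
    (Matrix.of fun i j : Fin (r + 2) => (hfib r (i + j) : ℤ)).det =
      (-1) ^ ((r + 3) / 2) := by
  set f : ℕ → ℤ := fun n => hfib r n
  have hc := fwdDiff_iter_sub_sub_eq_neg_fibDefect f
  have hpred : (Δ_[1] ^[r - 1] f 0 - Δ_[1] ^[r] f 0 - Δ_[1] ^[r + 1] f 0) ^ r = (-1) ^ r := by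
    rcases r with _ | s
    · rfl
    · rw [Nat.add_sub_cancel, hc, fwdDiff_iter_fibDefect_hfib_succ, Pi.one_apply]
  have htail : (fun k => Δ_[1] ^[2 * r + k] f 0) =
      fun k => Δ_[1] ^[k] (fun n => (Nat.fib n : ℤ)) 0 := by
    funext k
    rw [add_comm, Function.iterate_add_apply, fwdDiff_iter_two_mul_hfib]
  have hfibBlock : (hankel 2 fun k => Δ_[1] ^[k] (fun n => (Nat.fib n : ℤ)) 0).det = -1 := by
    simp [det_fin_two, hankel, fwdDiff]
  change (hankel (r + 2) f).det = _
  rw [← det_hankel_fwdDiff_iter, det_hankel_of_sub_sub_eq_zero r _ fun m h _ => by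
    rw [hc, fwdDiff_iter_fibDefect_hfib_of_le h, Pi.zero_apply, neg_zero], hpred, htail,
    hfibBlock, ← pow_add, ← pow_succ]
  obtain ⟨k, rfl | rfl⟩ := Nat.even_or_odd' r <;>
    exact neg_one_pow_congr (by simp only [Nat.even_iff]; omega)

/-- `det A_{r,0} = (-1)^⌊(r+3)/2⌋` where `A_{r,0}` is the
`(r+2)×(r+2)` Hankel matrix with `(i,j)` entry `F^{(r)}_{i+j}`. -/
theorem stmt_14 (r : ℕ) (hr : 1 ≤ r) :
    (Matrix.of fun i j : Fin (r + 2) => (hfib r (i + j) : ℤ)).det =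
      (-1) ^ ((r + 3) / 2) :=
  stmt_14_general r
end

section
/- Let r ≥ 0, n ≥ 0 and m > r + 2. Then the determinant of the m×m integer matrix M^{(m,n,r)} with (i,j) entry F^{(r)}_{n+i+j} for 0 ≤ i, j ≤ m−1 is zero. -/
/-- Coefficients of `(X^2 - X - 1) * (X - 1)^r`. -/
def hc : ℕ → ℕ → ℤ
  | 0, 0 => -1
  | 0, 1 => -1
  | 0, 2 => 1
  | 0, _ + 3 => 0
  | r + 1, 0 => - hc r 0
  | r + 1, j + 1 => hc r j - hc r (j + 1)

lemma hc_zero : ∀ r j, r + 2 < j → hc r j = 0 := by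
  intro r
  induction r with
  | zero =>
      intro j hj
      match j, hj with
      | k + 3, _ => rfl
  | succ r ih =>
      intro j hj
      match j, hj with
      | k + 1, hj =>
          show hc r k - hc r (k + 1) = 0
          rw [ih k (by omega), ih (k + 1) (by omega)]; ring

lemma hc_top : ∀ r, hc r (r + 2) = 1
  | 0 => rfl
  | r + 1 => by
      show hc r (r + 2) - hc r (r + 3) = 1
      rw [hc_top r, hc_zero r (r + 3) (by omega)]; ring

lemma hfib_step_s16 (r k : ℕ) : hfib (r + 1) (k + 1) = hfib (r + 1) k + hfib r (k + 1) := by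
  show ∑ i ∈ Finset.range (k + 2), hfib r i = _
  rw [Finset.sum_range_succ]
  rfl

lemma key : ∀ r n, ∑ j ∈ Finset.range (r + 3), hc r j * (hfib r (n + j) : ℤ) = 0 := by
  intro r
  induction r with
  | zero =>
      intro n
      simp only [Finset.sum_range_succ, Finset.sum_range_zero, hfib]
      have : Nat.fib (n + 2) = Nat.fib n + Nat.fib (n + 1) := by
        rw [Nat.fib_add_two]
      show 0 + hc 0 0 * (Nat.fib (n + 0) : ℤ) + hc 0 1 * (Nat.fib (n + 1) : ℤ)
          + hc 0 2 * (Nat.fib (n + 2) : ℤ) = 0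
      rw [this]
      show 0 + (-1) * (Nat.fib (n + 0) : ℤ) + (-1) * (Nat.fib (n + 1) : ℤ)
          + 1 * ((Nat.fib n : ℕ) + (Nat.fib (n + 1) : ℕ) : ℕ) = 0
      push_cast
      ring
  | succ r ih =>
      intro n
      rw [Finset.sum_range_succ']
      have hterm : ∀ j, hc (r + 1) (j + 1) * (hfib (r + 1) (n + (j + 1)) : ℤ)
          = (hc r j * (hfib (r + 1) (n + j) : ℤ)
              - hc r (j + 1) * (hfib (r + 1) (n + (j + 1)) : ℤ))
            + hc r j * (hfib r (n + 1 + j) : ℤ) := by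
        intro j
        have : hfib (r + 1) (n + (j + 1)) = hfib (r + 1) (n + j) + hfib r (n + j + 1) := by
          have := hfib_step_s16 r (n + j)
          simpa [Nat.add_assoc] using this
        rw [this]
        show (hc r j - hc r (j + 1)) * _ = _
        have hn : n + 1 + j = n + j + 1 := by omega
        rw [hn]
        push_cast
        ring
      calc ∑ j ∈ Finset.range (r + 3), hc (r + 1) (j + 1) * (hfib (r + 1) (n + (j + 1)) : ℤ)
            + hc (r + 1) 0 * (hfib (r + 1) (n + 0) : ℤ)
          = (∑ j ∈ Finset.range (r + 3),
              (hc r j * (hfib (r + 1) (n + j) : ℤ)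
                - hc r (j + 1) * (hfib (r + 1) (n + (j + 1)) : ℤ)))
            + (∑ j ∈ Finset.range (r + 3), hc r j * (hfib r (n + 1 + j) : ℤ))
            + hc (r + 1) 0 * (hfib (r + 1) (n + 0) : ℤ) := by
            rw [← Finset.sum_add_distrib]
            congr 1
            exact Finset.sum_congr rfl fun j _ => hterm j
        _ = 0 := by
            rw [ih (n + 1)]
            have htel : ∑ j ∈ Finset.range (r + 3),
                (hc r j * (hfib (r + 1) (n + j) : ℤ)
                  - hc r (j + 1) * (hfib (r + 1) (n + (j + 1)) : ℤ))
                = hc r 0 * (hfib (r + 1) (n + 0) : ℤ)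
                  - hc r (r + 3) * (hfib (r + 1) (n + (r + 3)) : ℤ) := by
              exact Finset.sum_range_sub' (fun j => hc r j * (hfib (r + 1) (n + j) : ℤ)) (r + 3)
            rw [htel, hc_zero r (r + 3) (by omega)]
            show _ + 0 + (- hc r 0) * _ = 0
            ring

/-- for `m > r + 2`, the `m×m` Hankel determinant with `(i,j)`
entry `F^{(r)}_{n+i+j}` vanishes. -/
theorem stmt_16 (r n m : ℕ) (hm : r + 2 < m) :
    (Matrix.of fun i j : Fin m => (hfib r (n + i + j) : ℤ)).det = 0 := by
  rw [← Matrix.exists_mulVec_eq_zero_iff]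
  refine ⟨fun j => hc r j, ?_, ?_⟩
  · intro h
    have := congrFun h ⟨r + 2, hm⟩
    rw [hc_top r] at this
    simp at this
  · funext i
    show ∑ j : Fin m, (hfib r (n + i + j) : ℤ) * hc r j = 0
    rw [Fin.sum_univ_eq_sum_range (fun j => (hfib r (n + i + j) : ℤ) * hc r j)]
    rw [← Finset.sum_subset (Finset.range_subset_range.2 (by omega : r + 3 ≤ m))]
    · rw [← key r (n + i)]
      exact Finset.sum_congr rfl fun j _ => by ring
    · intro j _ hj
      rw [hc_zero r j (by simp at hj; omega), mul_zero]
end
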